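/- arXiv:1704.06158 — 2 statements merged into one kernel-verified Lean document; each statement's English description precedes it below -/
import Mathlib

section
/- Let Φ(t) = e^{−t²/2}, T ≥ 2, and let R(t) = Σ_{m ∈ M'} r(m) m^{−it} be the resonator constructed in the paper (with M' a set of well-separated representatives of the set M and r defined via the multiplicative function f). Then ∫_{−∞}^{∞} |R(t)|² Φ(t/T) dt ≪ T Σ_{n ∈ M} f(n)², with an absolute implied constant. -/
open Complex MeasureTheory
open scoped Classical

/-- `log₂ N = log log N`. -/
noncomputable def log2 (N : ℕ) : ℝ := Real.log (Real.log N)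

/-- `log₃ N = log log log N`. -/
noncomputable def log3 (N : ℕ) : ℝ := Real.log (Real.log (Real.log N))

/-- The value of the multiplicative function `f` at a prime `p`: nonzero exactly for
the primes in `P = {p : e log N log₂N < p ≤ log N exp((log₂N)^γ) log₂N}`. -/
noncomputable def fp (N : ℕ) (γ : ℝ) (p : ℕ) : ℝ :=
  if p.Prime ∧ Real.exp 1 * Real.log N * log2 N < (p : ℝ) ∧
      (p : ℝ) ≤ Real.log N * Real.exp ((log2 N) ^ γ) * log2 N then
    Real.sqrt (Real.log N * log2 N / log3 N) *
      (1 / (Real.sqrt p * (Real.log p - log2 N - log3 N)))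
  else 0

/-- The multiplicative function `f`, supported on square-free numbers. -/
noncomputable def fres (N : ℕ) (γ : ℝ) (n : ℕ) : ℝ :=
  if Squarefree n then ∏ p ∈ n.primeFactors, fp N γ p else 0

/-- Membership in the set `M`: `n` lies in the support of `f` and has at most
`a log N/(k² log₃N)` prime divisors in each block
`P_k = {p : e^k log N log₂N < p ≤ e^{k+1} log N log₂N}`, `1 ≤ k ≤ (log₂N)^γ`. -/
def memM (N : ℕ) (γ a : ℝ) (n : ℕ) : Prop :=
  fres N γ n ≠ 0 ∧
    ∀ k : ℕ, 1 ≤ k → (k : ℝ) ≤ (log2 N) ^ γ →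
      ((n.primeFactors.filter (fun p : ℕ =>
          Real.exp k * Real.log N * log2 N < (p : ℝ) ∧
          (p : ℝ) ≤ Real.exp (k + 1) * Real.log N * log2 N)).card : ℝ)
        ≤ a * Real.log N / ((k : ℝ) ^ 2 * log3 N)

/-- The resonator `R(t) = Σ_{j ∈ J} r(m_j) m_j^{-it}`. -/
noncomputable def resonator (J : Finset ℤ) (m : ℤ → ℕ) (r : ℤ → ℝ) (t : ℝ) : ℂ :=
  ∑ j ∈ J, (r j : ℂ) * (m j : ℂ) ^ (-(I * t))

/-!
Expanding `|R(t)|²` and integrating term by term against the Gaussian (whose Fourier transform is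
again a Gaussian) turns the left side into `√(2π) T Σ_{j,k} r_j r_k exp(-T² (log m_j - log m_k)² / 2)`.
Since `m_j ∈ [(1 + 1/T)^j, (1 + 1/T)^(j+1))` and `log (1 + 1/T) ≥ 1/(2T)`, the frequencies satisfy
`T |log m_j - log m_k| ≥ (|j - k| - 1) / 2`, so the kernel decays geometrically in `|j - k|` and
Schur's test bounds the double sum by `O(Σ_j r_j²)`. Finally every `n` lies in at most four of the
windows `[(1 + 1/T)^(j-1), (1 + 1/T)^(j+2)]` defining `r_j²`, so `Σ_j r_j² ≤ 4 Σ_{n ∈ M} f(n)²`.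
-/

lemma integral_cexp_mul_I_mul_gaussian {b : ℝ} (hb : 0 < b) (c : ℝ) :
    ∫ t : ℝ, cexp (c * t * I) * cexp (-b * t ^ 2)
      = ((Real.sqrt (Real.pi / b) * Real.exp (-c ^ 2 / (4 * b)) : ℝ) : ℂ) := by
  have h := fourierIntegral_gaussian (b := (b : ℂ)) (by simpa using hb) (c : ℂ)
  simp_rw [show ∀ t : ℝ, (c : ℂ) * t * I = I * c * t from fun t => by ring]
  rw [h, Real.sqrt_eq_rpow, ofReal_mul, ofReal_exp, ofReal_cpow (by positivity)]
  push_cast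
  rfl

lemma ofReal_norm_sum_mul_cexp_sq {ι : Type*} (s : Finset ι) (a θ : ι → ℝ) :
    ((‖∑ j ∈ s, (a j : ℂ) * cexp (θ j * I)‖ ^ 2 : ℝ) : ℂ)
      = ∑ j ∈ s, ∑ k ∈ s, (a j * a k : ℝ) * cexp ((θ j - θ k : ℝ) * I) := by
  rw [ofReal_pow, ← mul_conj', map_sum, Finset.sum_mul_sum]
  refine Finset.sum_congr rfl fun j _ => Finset.sum_congr rfl fun k _ => ?_
  rw [map_mul, conj_ofReal, ← exp_conj, map_mul, conj_ofReal, conj_I]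
  push_cast
  rw [sub_mul, sub_eq_add_neg, exp_add, mul_neg]
  ring

lemma integral_norm_sum_sq_mul_exp_neg_mul_sq {ι : Type*} (s : Finset ι) (a ω : ι → ℝ) {b : ℝ}
    (hb : 0 < b) :
    ∫ t : ℝ, ‖∑ j ∈ s, (a j : ℂ) * cexp ((ω j * t : ℝ) * I)‖ ^ 2 * Real.exp (-b * t ^ 2)
      = Real.sqrt (Real.pi / b) *
          ∑ j ∈ s, ∑ k ∈ s, a j * a k * Real.exp (-(ω j - ω k) ^ 2 / (4 * b)) := by
  have hpt : ∀ t : ℝ,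
      ((‖∑ j ∈ s, (a j : ℂ) * cexp ((ω j * t : ℝ) * I)‖ ^ 2 * Real.exp (-b * t ^ 2) : ℝ) : ℂ)
        = ∑ j ∈ s, ∑ k ∈ s, ((a j * a k : ℝ) : ℂ) *
            (cexp ((ω j - ω k : ℝ) * t * I) * cexp (-b * t ^ 2)) := by
    intro t
    rw [ofReal_mul, ofReal_norm_sum_mul_cexp_sq, Finset.sum_mul]
    refine Finset.sum_congr rfl fun j _ => ?_
    rw [Finset.sum_mul]
    refine Finset.sum_congr rfl fun k _ => ?_
    push_cast
    ring_nf
  have hgauss : ∀ c : ℝ, ∫ t : ℝ, cexp (c * t * I) * cexp (-b * t ^ 2)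
      = ((Real.sqrt (Real.pi / b) * Real.exp (-c ^ 2 / (4 * b)) : ℝ) : ℂ) :=
    integral_cexp_mul_I_mul_gaussian hb
  have hint : ∀ c : ℝ, Integrable fun t : ℝ => cexp (c * t * I) * cexp (-b * t ^ 2) := by
    intro c
    refine Integrable.of_integral_ne_zero ?_
    rw [hgauss, ofReal_ne_zero]
    exact mul_ne_zero (Real.sqrt_pos.2 (by positivity)).ne' (Real.exp_pos _).ne'
  apply ofReal_injective
  rw [← integral_complex_ofReal, MeasureTheory.integral_congr_ae (Filter.Eventually.of_forall hpt),
    integral_finsetSum _ fun j _ => integrable_finsetSum _ fun k _ => (hint _).const_mul _]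
  simp only [integral_finsetSum _ fun k _ => (hint _).const_mul _, integral_const_mul, hgauss,
    Finset.mul_sum]
  push_cast
  refine Finset.sum_congr rfl fun j _ => Finset.sum_congr rfl fun k _ => by ring

lemma natCast_cpow_neg_I_mul {n : ℕ} (hn : n ≠ 0) (t : ℝ) :
    (n : ℂ) ^ (-(I * t)) = cexp ((-Real.log n * t : ℝ) * I) := by
  rw [cpow_def_of_ne_zero (Nat.cast_ne_zero.2 hn), ← ofReal_natCast,
    ← ofReal_log (Nat.cast_nonneg n)]
  push_cast
  ring_nf

lemma integral_norm_resonator_sq_mul_exp (J : Finset ℤ) (m : ℤ → ℕ) (r : ℤ → ℝ)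
    (hm : ∀ j ∈ J, m j ≠ 0) {T : ℝ} (hT : 0 < T) :
    ∫ t : ℝ, ‖resonator J m r t‖ ^ 2 * Real.exp (-(t / T) ^ 2 / 2)
      = Real.sqrt (2 * Real.pi) * T * ∑ j ∈ J, ∑ k ∈ J,
          r j * r k * Real.exp (-(T * (Real.log (m j) - Real.log (m k))) ^ 2 / 2) := by
  have hres : ∀ t, resonator J m r t
      = ∑ j ∈ J, (r j : ℂ) * cexp ((-Real.log (m j) * t : ℝ) * I) := fun t =>
    Finset.sum_congr rfl fun j hj => by rw [natCast_cpow_neg_I_mul (hm j hj)]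
  have hgauss : ∀ t : ℝ, -(t / T) ^ 2 / 2 = -(1 / (2 * T ^ 2)) * t ^ 2 := fun t => by
    field_simp
  simp_rw [hres, hgauss]
  rw [integral_norm_sum_sq_mul_exp_neg_mul_sq J r _ (by positivity),
    show Real.pi / (1 / (2 * T ^ 2)) = (Real.sqrt (2 * Real.pi) * T) ^ 2 by
      rw [mul_pow, Real.sq_sqrt (by positivity)]; field_simp,
    Real.sqrt_sq (by positivity)]
  congr 1
  refine Finset.sum_congr rfl fun j _ => Finset.sum_congr rfl fun k _ => ?_
  congr 2
  field_simp
  ring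

lemma sum_sum_mul_mul_le_of_sum_le {ι : Type*} (s : Finset ι) (a : ι → ℝ) {w : ι → ι → ℝ}
    (hw : ∀ j k, w j k = w k j) (hw0 : ∀ j ∈ s, ∀ k ∈ s, 0 ≤ w j k) {B : ℝ}
    (hB : ∀ j ∈ s, ∑ k ∈ s, w j k ≤ B) :
    ∑ j ∈ s, ∑ k ∈ s, a j * a k * w j k ≤ B * ∑ j ∈ s, a j ^ 2 := by
  have hswap : ∑ j ∈ s, ∑ k ∈ s, a k ^ 2 * w j k = ∑ j ∈ s, ∑ k ∈ s, a j ^ 2 * w j k := by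
    rw [Finset.sum_comm]
    exact Finset.sum_congr rfl fun j _ => Finset.sum_congr rfl fun k _ => by rw [hw]
  have hamgm : 2 * ∑ j ∈ s, ∑ k ∈ s, a j * a k * w j k
      ≤ 2 * ∑ j ∈ s, ∑ k ∈ s, a j ^ 2 * w j k := by
    calc 2 * ∑ j ∈ s, ∑ k ∈ s, a j * a k * w j k
        ≤ ∑ j ∈ s, ∑ k ∈ s, (a j ^ 2 * w j k + a k ^ 2 * w j k) := by
          rw [Finset.mul_sum]
          refine Finset.sum_le_sum fun j hj => ?_
          rw [Finset.mul_sum]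
          refine Finset.sum_le_sum fun k hk => ?_
          nlinarith [mul_nonneg (sq_nonneg (a j - a k)) (hw0 j hj k hk)]
      _ = 2 * ∑ j ∈ s, ∑ k ∈ s, a j ^ 2 * w j k := by
          simp only [Finset.sum_add_distrib, hswap]; ring
  calc ∑ j ∈ s, ∑ k ∈ s, a j * a k * w j k
      ≤ ∑ j ∈ s, a j ^ 2 * ∑ k ∈ s, w j k := by
        simp only [Finset.mul_sum]; linarith
    _ ≤ ∑ j ∈ s, a j ^ 2 * B :=
        Finset.sum_le_sum fun j hj => mul_le_mul_of_nonneg_left (hB j hj) (sq_nonneg _)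
    _ = B * ∑ j ∈ s, a j ^ 2 := by rw [Finset.mul_sum]; simp only [mul_comm]

lemma hasSum_pow_natAbs {x : ℝ} (h0 : 0 ≤ x) (h1 : x < 1) :
    HasSum (fun n : ℤ => x ^ n.natAbs) ((1 + x) / (1 - x)) := by
  have hpos : HasSum (fun n : ℕ => x ^ (n : ℤ).natAbs) (1 - x)⁻¹ := by
    simpa using hasSum_geometric_of_lt_one h0 h1
  have hneg : HasSum (fun n : ℕ => x ^ (-((n : ℤ) + 1)).natAbs) (x * (1 - x)⁻¹) := by
    have hterm : (fun n : ℕ => x ^ (-((n : ℤ) + 1)).natAbs) = fun n => x * x ^ n := by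
      funext n
      rw [Int.natAbs_neg, ← pow_succ', ← Nat.cast_succ, Int.natAbs_natCast]
    rw [hterm]
    exact (hasSum_geometric_of_lt_one h0 h1).mul_left x
  have hsum : (1 + x) / (1 - x) = (1 - x)⁻¹ + x * (1 - x)⁻¹ := by ring
  rw [hsum]
  exact HasSum.of_nat_of_neg_add_one (f := fun n : ℤ => x ^ n.natAbs) hpos hneg

lemma sum_pow_natAbs_sub_le {x : ℝ} (h0 : 0 ≤ x) (h1 : x < 1) (s : Finset ℤ) (j : ℤ) :
    ∑ k ∈ s, x ^ (j - k).natAbs ≤ (1 + x) / (1 - x) := by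
  have h := (Equiv.subLeft j).hasSum_iff.mpr (hasSum_pow_natAbs h0 h1)
  exact sum_le_hasSum s (fun _ _ => pow_nonneg h0 _) h

lemma one_le_two_mul_mul_log_one_add_one_div {T : ℝ} (hT : 1 ≤ T) :
    1 ≤ 2 * T * Real.log (1 + 1 / T) := by
  have h := Real.one_sub_inv_le_log_of_pos (x := 1 + 1 / T) (by positivity)
  rw [show (1 : ℝ) - (1 + 1 / T)⁻¹ = 1 / (T + 1) by field_simp; ring] at h
  calc 1 ≤ 2 * T * (1 / (T + 1)) := by
        rw [mul_one_div, le_div_iff₀ (by positivity)]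
        linarith
    _ ≤ 2 * T * Real.log (1 + 1 / T) := by gcongr

lemma log_mem_Ico_of_mem_Ico_zpow {q y : ℝ} (hq : 0 < q) {j : ℤ}
    (hy : y ∈ Set.Ico (q ^ j) (q ^ (j + 1))) :
    Real.log y ∈ Set.Ico (j * Real.log q) ((j + 1) * Real.log q) := by
  have hy0 : 0 < y := (zpow_pos hq j).trans_le hy.1
  constructor
  · simpa [Real.log_zpow] using Real.log_le_log (zpow_pos hq j) hy.1
  · simpa [Real.log_zpow] using Real.log_lt_log hy0 hy.2

lemma natAbs_sub_sub_one_mul_le_abs_sub {δ : ℝ} {L : ℤ → ℝ} {j k : ℤ}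
    (hj : L j ∈ Set.Ico (j * δ) ((j + 1) * δ)) (hk : L k ∈ Set.Ico (k * δ) ((k + 1) * δ)) :
    (((j - k).natAbs : ℝ) - 1) * δ ≤ |L j - L k| := by
  rw [Nat.cast_natAbs]
  push_cast
  obtain ⟨hj1, hj2⟩ := hj
  obtain ⟨hk1, hk2⟩ := hk
  rcases le_total (j : ℝ) k with h | h
  · rw [abs_of_nonpos (sub_nonpos.2 h), abs_sub_comm]
    exact le_trans (by linarith) (le_abs_self _)
  · rw [abs_of_nonneg (sub_nonneg.2 h)]
    exact le_trans (by linarith) (le_abs_self _)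

lemma exp_neg_sq_div_two_le {u d : ℝ} (hd : d - 1 ≤ 2 * u) :
    Real.exp (-u ^ 2 / 2) ≤ Real.exp (3 / 8) * Real.exp (-d / 4) := by
  rw [← Real.exp_add, Real.exp_le_exp]
  nlinarith [sq_nonneg (u - 1 / 2)]

lemma sum_exp_neg_sq_le_of_mem_Ico {T δ : ℝ} (hTδ : 1 ≤ 2 * T * δ) {L : ℤ → ℝ} {s : Finset ℤ}
    (hL : ∀ j ∈ s, L j ∈ Set.Ico (j * δ) ((j + 1) * δ)) {j : ℤ} (hj : j ∈ s) :
    ∑ k ∈ s, Real.exp (-(T * (L j - L k)) ^ 2 / 2)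
      ≤ Real.exp (3 / 8) * ((1 + Real.exp (-1 / 4)) / (1 - Real.exp (-1 / 4))) := by
  have hδ : 0 < δ := by linarith [(hL j hj).1, (hL j hj).2]
  have hT : 0 < T := by nlinarith
  have hterm : ∀ k ∈ s, Real.exp (-(T * (L j - L k)) ^ 2 / 2)
      ≤ Real.exp (3 / 8) * Real.exp (-1 / 4) ^ (j - k).natAbs := by
    intro k hk
    have hsep := natAbs_sub_sub_one_mul_le_abs_sub (hL j hj) (hL k hk)
    have hd : ((j - k).natAbs : ℝ) - 1 ≤ 2 * (T * |L j - L k|) := by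
      rcases le_total ((j - k).natAbs : ℝ) 1 with h | h
      · nlinarith [abs_nonneg (L j - L k)]
      · nlinarith
    rw [← Real.exp_nat_mul, show (T * (L j - L k)) ^ 2 = (T * |L j - L k|) ^ 2 by
      rw [mul_pow, mul_pow, sq_abs]]
    convert exp_neg_sq_div_two_le hd using 3
    ring
  have hx : Real.exp (-1 / 4) < 1 := Real.exp_lt_one_iff.2 (by norm_num)
  calc ∑ k ∈ s, Real.exp (-(T * (L j - L k)) ^ 2 / 2)
      ≤ ∑ k ∈ s, Real.exp (3 / 8) * Real.exp (-1 / 4) ^ (j - k).natAbs :=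
        Finset.sum_le_sum hterm
    _ ≤ Real.exp (3 / 8) * ((1 + Real.exp (-1 / 4)) / (1 - Real.exp (-1 / 4))) := by
        rw [← Finset.mul_sum]
        exact mul_le_mul_of_nonneg_left
          (sum_pow_natAbs_sub_le (Real.exp_pos _).le hx s j) (Real.exp_pos _).le

lemma sum_sum_filter_le_mul_sum {ι κ : Type*} (s : Finset ι) (t : Finset κ) (P : κ → ι → Prop)
    [∀ j, DecidablePred (P j)] [∀ n, DecidablePred (P · n)] {F : ι → ℝ}
    (hF : ∀ n ∈ s, 0 ≤ F n) {K : ℕ} (hK : ∀ n ∈ s, (t.filter (P · n)).card ≤ K) :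
    ∑ j ∈ t, ∑ n ∈ s.filter (P j), F n ≤ K * ∑ n ∈ s, F n := by
  simp only [Finset.sum_filter]
  rw [Finset.sum_comm, Finset.mul_sum]
  refine Finset.sum_le_sum fun n hn => ?_
  rw [← Finset.sum_filter, Finset.sum_const, nsmul_eq_mul]
  exact mul_le_mul_of_nonneg_right (by exact_mod_cast hK n hn) (hF n hn)

lemma card_filter_zpow_le_le_zpow_le_four {q : ℝ} (hq : 1 < q) (J : Finset ℤ) (y : ℝ) :
    (J.filter fun j => q ^ (j - 1) ≤ y ∧ y ≤ q ^ (j + 2)).card ≤ 4 := by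
  set A := J.filter fun j => q ^ (j - 1) ≤ y ∧ y ≤ q ^ (j + 2)
  rcases A.eq_empty_or_nonempty with hA | hA
  · simp [hA]
  have hmin := Finset.mem_filter.mp (A.min'_mem hA)
  have hsub : A ⊆ Finset.Icc (A.min' hA) (A.min' hA + 3) := fun j hj => by
    have hj' := Finset.mem_filter.mp hj
    have := (zpow_le_zpow_iff_right₀ hq).mp (hj'.2.1.trans hmin.2.2)
    exact Finset.mem_Icc.mpr ⟨A.min'_le j hj, by omega⟩
  have hcard := Finset.card_le_card hsub
  rw [Int.card_Icc] at hcard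
  omega

theorem resonator_mean_square_bound_general
    (γ κ a : ℝ) :
    ∃ C : ℝ, 0 < C ∧
      ∀ (T : ℝ), 2 ≤ T →
      ∀ (N : ℕ), N = ⌊T ^ κ⌋₊ →
      ∀ (M : Finset ℕ), (∀ n : ℕ, n ∈ M ↔ memM N γ a n) →
      ∀ (J : Finset ℤ), (∀ j : ℤ, j ∈ J ↔ ∃ n ∈ M,
          (1 + 1 / T) ^ j ≤ (n : ℝ) ∧ (n : ℝ) < (1 + 1 / T) ^ (j + 1)) →
      ∀ (m : ℤ → ℕ), (∀ j ∈ J, m j ∈ M ∧ (1 + 1 / T) ^ j ≤ (m j : ℝ) ∧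
          (m j : ℝ) < (1 + 1 / T) ^ (j + 1) ∧
          ∀ n ∈ M, (1 + 1 / T) ^ j ≤ (n : ℝ) → (n : ℝ) < (1 + 1 / T) ^ (j + 1) →
            m j ≤ n) →
      ∀ (r : ℤ → ℝ), (∀ j ∈ J, r j = Real.sqrt (∑ n ∈ M.filter (fun n : ℕ =>
          (1 + 1 / T) ^ (j - 1) ≤ (n : ℝ) ∧ (n : ℝ) ≤ (1 + 1 / T) ^ (j + 2)),
            fres N γ n ^ 2)) →
      (∫ t : ℝ, ‖resonator J m r t‖ ^ 2 * Real.exp (-(t / T) ^ 2 / 2))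
        ≤ C * T * ∑ n ∈ M, fres N γ n ^ 2 := by
  set B := Real.exp (3 / 8) * ((1 + Real.exp (-1 / 4)) / (1 - Real.exp (-1 / 4)))
  have hB : 0 < B := mul_pos (Real.exp_pos _) (div_pos (by positivity)
    (sub_pos.2 (Real.exp_lt_one_iff.2 (by norm_num))))
  refine ⟨4 * Real.sqrt (2 * Real.pi) * B, by positivity, ?_⟩
  intro T hT N _ M _ J _ m hm r hr
  set q := 1 + 1 / T
  have hq : 1 < q := lt_add_of_pos_right 1 (by positivity)
  have hL : ∀ j ∈ J, Real.log (m j) ∈ Set.Ico (j * Real.log q) ((j + 1) * Real.log q) :=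
    fun j hj => log_mem_Ico_of_mem_Ico_zpow (by positivity) ⟨(hm j hj).2.1, (hm j hj).2.2.1⟩
  have hm0 : ∀ j ∈ J, m j ≠ 0 := fun j hj h => by
    simpa [h] using (zpow_pos (zero_lt_one.trans hq) j).trans_le (hm j hj).2.1
  have hTq : 1 ≤ 2 * T * Real.log q := one_le_two_mul_mul_log_one_add_one_div (by linarith)
  have hr2 : ∀ j ∈ J, r j ^ 2 = ∑ n ∈ M.filter (fun n : ℕ =>
      q ^ (j - 1) ≤ (n : ℝ) ∧ (n : ℝ) ≤ q ^ (j + 2)), fres N γ n ^ 2 := fun j hj => by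
    rw [hr j hj, Real.sq_sqrt (Finset.sum_nonneg fun n _ => sq_nonneg _)]
  rw [integral_norm_resonator_sq_mul_exp J m r hm0 (by positivity : (0 : ℝ) < T)]
  calc Real.sqrt (2 * Real.pi) * T * ∑ j ∈ J, ∑ k ∈ J,
        r j * r k * Real.exp (-(T * (Real.log (m j) - Real.log (m k))) ^ 2 / 2)
      ≤ Real.sqrt (2 * Real.pi) * T * (B * ∑ j ∈ J, r j ^ 2) := by
        refine mul_le_mul_of_nonneg_left (sum_sum_mul_mul_le_of_sum_le J r ?_
          (fun _ _ _ _ => (Real.exp_pos _).le) fun j hj => sum_exp_neg_sq_le_of_mem_Ico hTq hL hj)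
          (by positivity)
        intro j k
        rw [← neg_sub, mul_neg, neg_sq]
    _ ≤ Real.sqrt (2 * Real.pi) * T * (B * (4 * ∑ n ∈ M, fres N γ n ^ 2)) := by
        rw [Finset.sum_congr rfl hr2]
        gcongr
        exact_mod_cast sum_sum_filter_le_mul_sum M J _ (fun n _ => sq_nonneg _)
          fun n _ => card_filter_zpow_le_le_zpow_le_four hq J n
    _ = 4 * Real.sqrt (2 * Real.pi) * B * T * ∑ n ∈ M, fres N γ n ^ 2 := by ring

/-- Lemma 3.3: smoothed mean square bound for the resonator,
`∫ |R(t)|² Φ(t/T) dt ≪ T Σ_{n ∈ M} f(n)²`. -/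
theorem resonator_mean_square_bound
    (γ κ a : ℝ) (hγ : 0 < γ ∧ γ < 1) (hκ : 0 < κ ∧ κ ≤ 1) (ha : 1 < a ∧ a < 1 / γ) :
    ∃ C : ℝ, 0 < C ∧
      ∀ (T : ℝ), 2 ≤ T →
      ∀ (N : ℕ), N = ⌊T ^ κ⌋₊ →
      ∀ (M : Finset ℕ), (∀ n : ℕ, n ∈ M ↔ memM N γ a n) →
      ∀ (J : Finset ℤ), (∀ j : ℤ, j ∈ J ↔ ∃ n ∈ M,
          (1 + 1 / T) ^ j ≤ (n : ℝ) ∧ (n : ℝ) < (1 + 1 / T) ^ (j + 1)) →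
      ∀ (m : ℤ → ℕ), (∀ j ∈ J, m j ∈ M ∧ (1 + 1 / T) ^ j ≤ (m j : ℝ) ∧
          (m j : ℝ) < (1 + 1 / T) ^ (j + 1) ∧
          ∀ n ∈ M, (1 + 1 / T) ^ j ≤ (n : ℝ) → (n : ℝ) < (1 + 1 / T) ^ (j + 1) →
            m j ≤ n) →
      ∀ (r : ℤ → ℝ), (∀ j ∈ J, r j = Real.sqrt (∑ n ∈ M.filter (fun n : ℕ =>
          (1 + 1 / T) ^ (j - 1) ≤ (n : ℝ) ∧ (n : ℝ) ≤ (1 + 1 / T) ^ (j + 2)),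
            fres N γ n ^ 2)) →
      (∫ t : ℝ, ‖resonator J m r t‖ ^ 2 * Real.exp (-(t / T) ^ 2 / 2))
        ≤ C * T * ∑ n ∈ M, fres N γ n ^ 2 :=
  resonator_mean_square_bound_general γ κ a
end

section
/- With the resonator construction of the paper: for every positive integer k, Σ_{m,n ∈ M, mk = n} f(m) f(n) ≤ Σ_{m',n' ∈ M', |k m'/n' − 1| ≤ 3/T} r(m') r(n'). -/
/-!
Sort every `a ∈ M` with `a * k ∈ M` by the pair `(j, l)` of intervals `[x^j, x^(j+1))`,
`x = 1 + 1/T`, containing `a` and `a * k`. On the block `(j, l)` Cauchy–Schwarz bounds the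
sum by `r j * r l`, since both `a` and `a * k` lie in the widened windows defining `r`. A
nonempty block forces `k * m j / m l = (a * k / m l) * (m j / a)`, a product of two ratios of
points in a common interval, to lie in `(x⁻², x²) ⊆ [1 - 3/T, 1 + 3/T]`.
-/

open scoped Classical

open Finset

lemma zpow_floor_logb_le {x y : ℝ} (hx : 1 < x) (hy : 0 < y) : x ^ ⌊Real.logb x y⌋ ≤ y := by
  rw [← Real.rpow_intCast]
  exact (Real.le_logb_iff_rpow_le hx hy).1 (Int.floor_le _)

lemma lt_zpow_floor_logb_add_one {x y : ℝ} (hx : 1 < x) (hy : 0 < y) :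
    y < x ^ (⌊Real.logb x y⌋ + 1) := by
  rw [← Real.rpow_intCast, Int.cast_add, Int.cast_one]
  exact (Real.logb_lt_iff_lt_rpow hx hy).1 (Int.lt_floor_add_one _)

lemma div_lt_of_mem_Ico_zpow {x p q : ℝ} {j : ℤ} (hx : 0 < x)
    (hp : p ∈ Set.Ico (x ^ j) (x ^ (j + 1))) (hq : q ∈ Set.Ico (x ^ j) (x ^ (j + 1))) :
    p / q < x := by
  have hq0 : 0 < q := (zpow_pos hx j).trans_le hq.1
  rw [div_lt_iff₀ hq0]
  calc p < x ^ (j + 1) := hp.2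
    _ = x * x ^ j := by rw [zpow_add_one₀ hx.ne', mul_comm]
    _ ≤ x * q := mul_le_mul_of_nonneg_left hq.1 hx.le

lemma inv_lt_div_of_mem_Ico_zpow {x p q : ℝ} {j : ℤ} (hx : 0 < x)
    (hp : p ∈ Set.Ico (x ^ j) (x ^ (j + 1))) (hq : q ∈ Set.Ico (x ^ j) (x ^ (j + 1))) :
    x⁻¹ < p / q := by
  have hp0 : 0 < p := (zpow_pos hx j).trans_le hp.1
  have hq0 : 0 < q := (zpow_pos hx j).trans_le hq.1
  rw [← inv_div]
  exact inv_strictAnti₀ (by positivity) (div_lt_of_mem_Ico_zpow hx hq hp)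

lemma abs_mul_sub_one_le {t u v : ℝ} (ht : 0 ≤ t) (ht1 : t ≤ 1)
    (hu : (1 + t)⁻¹ < u) (hu' : u < 1 + t) (hv : (1 + t)⁻¹ < v) (hv' : v < 1 + t) :
    |u * v - 1| ≤ 3 * t := by
  have hx : 0 < 1 + t := by linarith
  have hu0 : 0 < u := (inv_pos.2 hx).trans hu
  have hv0 : 0 < v := (inv_pos.2 hx).trans hv
  have hlower : 1 - 3 * t ≤ (1 + t)⁻¹ * (1 + t)⁻¹ := by
    rw [← mul_inv, ← one_div, le_div_iff₀ (by positivity)]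
    nlinarith [mul_nonneg ht (mul_nonneg ht ht)]
  rw [abs_le]
  constructor
  · nlinarith [mul_lt_mul'' hu hv (by positivity) (by positivity)]
  · nlinarith [mul_lt_mul'' hu' hv' hu0.le hv0.le]

lemma abs_mul_div_sub_one_le {T a k p q : ℝ} {j l : ℤ} (hT : 1 ≤ T)
    (ha : a ∈ Set.Ico ((1 + 1 / T) ^ j) ((1 + 1 / T) ^ (j + 1)))
    (hak : a * k ∈ Set.Ico ((1 + 1 / T) ^ l) ((1 + 1 / T) ^ (l + 1)))
    (hp : p ∈ Set.Ico ((1 + 1 / T) ^ j) ((1 + 1 / T) ^ (j + 1)))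
    (hq : q ∈ Set.Ico ((1 + 1 / T) ^ l) ((1 + 1 / T) ^ (l + 1))) :
    |k * p / q - 1| ≤ 3 / T := by
  have ht : 0 ≤ 1 / T := by positivity
  have hx : 0 < 1 + 1 / T := by linarith
  have ha0 : a ≠ 0 := ((zpow_pos hx j).trans_le ha.1).ne'
  have hsplit : k * p / q = (a * k / q) * (p / a) := by field_simp
  rw [hsplit, div_eq_mul_one_div 3]
  exact abs_mul_sub_one_le ht ((div_le_one (by linarith)).2 hT)
    (inv_lt_div_of_mem_Ico_zpow hx hak hq) (div_lt_of_mem_Ico_zpow hx hak hq)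
    (inv_lt_div_of_mem_Ico_zpow hx hp ha) (div_lt_of_mem_Ico_zpow hx hp ha)

lemma Ico_zpow_subset_Icc_zpow {x : ℝ} (hx : 1 ≤ x) (j : ℤ) :
    Set.Ico (x ^ j) (x ^ (j + 1)) ⊆ Set.Icc (x ^ (j - 1)) (x ^ (j + 2)) :=
  Set.Ico_subset_Icc_self.trans <|
    Set.Icc_subset_Icc (zpow_le_zpow_right₀ hx (by omega)) (zpow_le_zpow_right₀ hx (by omega))

lemma sum_mul_comp_le_sqrt_mul_sqrt {α : Type*} (f : α → ℝ) {e : α → α}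
    {A S S' : Finset α} (he : Set.InjOn e A) (hS : A ⊆ S) (hS' : ∀ a ∈ A, e a ∈ S') :
    ∑ a ∈ A, f a * f (e a) ≤ √(∑ n ∈ S, f n ^ 2) * √(∑ n ∈ S', f n ^ 2) := by
  have himage : ∑ a ∈ A, f (e a) ^ 2 = ∑ n ∈ A.image e, f n ^ 2 :=
    (sum_image (f := fun n => f n ^ 2) he).symm
  calc ∑ a ∈ A, f a * f (e a) ≤ √(∑ a ∈ A, f a ^ 2) * √(∑ a ∈ A, f (e a) ^ 2) :=
        Real.sum_mul_le_sqrt_mul_sqrt A f (f ∘ e)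
    _ ≤ √(∑ n ∈ S, f n ^ 2) * √(∑ n ∈ S', f n ^ 2) := by
        rw [himage]
        gcongr
        exact image_subset_iff.2 hS'

lemma sum_sum_ite_eq_comp {α R : Type*} [DecidableEq α] [AddCommMonoid R] (s : Finset α)
    (e : α → α) (g : α → α → R) :
    (∑ a ∈ s, ∑ b ∈ s, if e a = b then g a b else 0) =
      ∑ a ∈ s with e a ∈ s, g a (e a) := by
  rw [sum_filter]
  exact sum_congr rfl fun a _ => sum_ite_eq s (e a) (g a)

lemma sum_mul_apply_mul_le_ite {T : ℝ} (hT : 1 ≤ T) {k : ℕ} (hk : 0 < k) (f : ℕ → ℝ)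
    {M F : Finset ℕ} {j l : ℤ} {p q : ℝ}
    (hp : p ∈ Set.Ico ((1 + 1 / T) ^ j) ((1 + 1 / T) ^ (j + 1)))
    (hq : q ∈ Set.Ico ((1 + 1 / T) ^ l) ((1 + 1 / T) ^ (l + 1)))
    (hF : ∀ a ∈ F, a ∈ M ∧ a * k ∈ M ∧
      (a : ℝ) ∈ Set.Ico ((1 + 1 / T) ^ j) ((1 + 1 / T) ^ (j + 1)) ∧
      ((a * k : ℕ) : ℝ) ∈ Set.Ico ((1 + 1 / T) ^ l) ((1 + 1 / T) ^ (l + 1))) :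
    ∑ a ∈ F, f a * f (a * k) ≤
      if |(k : ℝ) * p / q - 1| ≤ 3 / T then
        √(∑ n ∈ M.filter (fun n : ℕ =>
          (1 + 1 / T) ^ (j - 1) ≤ (n : ℝ) ∧ (n : ℝ) ≤ (1 + 1 / T) ^ (j + 2)), f n ^ 2) *
        √(∑ n ∈ M.filter (fun n : ℕ =>
          (1 + 1 / T) ^ (l - 1) ≤ (n : ℝ) ∧ (n : ℝ) ≤ (1 + 1 / T) ^ (l + 2)), f n ^ 2)
      else 0 := by
  have hx : 1 ≤ 1 + 1 / T := le_add_of_nonneg_right (by positivity)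
  split_ifs with hclose
  · refine sum_mul_comp_le_sqrt_mul_sqrt f (fun a _ b _ h => Nat.eq_of_mul_eq_mul_right hk h)
      (fun a ha => ?_) (fun a ha => ?_)
    · obtain ⟨haM, -, ha, -⟩ := hF a ha
      exact mem_filter.2 ⟨haM, Ico_zpow_subset_Icc_zpow hx j ha⟩
    · obtain ⟨-, hakM, -, hak⟩ := hF a ha
      exact mem_filter.2 ⟨hakM, Ico_zpow_subset_Icc_zpow hx l hak⟩
  · refine (sum_eq_zero fun a ha => absurd ?_ hclose).le
    obtain ⟨-, -, ha, hak⟩ := hF a ha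
    rw [Nat.cast_mul] at hak
    exact abs_mul_div_sub_one_le hT ha hak hp hq

theorem coefficient_transfer_general (T : ℝ) (hT : 2 ≤ T)
    (M : Finset ℕ) (f : ℕ → ℝ)
    (hM : ∀ n ∈ M, 0 < n ∧ Squarefree n)
    (J : Finset ℤ)
    (hJ : ∀ j : ℤ, j ∈ J ↔ ∃ n ∈ M,
      (1 + 1 / T) ^ j ≤ (n : ℝ) ∧ (n : ℝ) < (1 + 1 / T) ^ (j + 1))
    (m : ℤ → ℕ)
    (hm : ∀ j ∈ J, m j ∈ M ∧ (1 + 1 / T) ^ j ≤ (m j : ℝ) ∧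
      (m j : ℝ) < (1 + 1 / T) ^ (j + 1) ∧
      ∀ n ∈ M, (1 + 1 / T) ^ j ≤ (n : ℝ) → (n : ℝ) < (1 + 1 / T) ^ (j + 1) → m j ≤ n)
    (r : ℤ → ℝ)
    (hr : ∀ j ∈ J, r j = Real.sqrt (∑ n ∈ M.filter (fun n : ℕ =>
      (1 + 1 / T) ^ (j - 1) ≤ (n : ℝ) ∧ (n : ℝ) ≤ (1 + 1 / T) ^ (j + 2)), f n ^ 2)) :
    ∀ k : ℕ, 0 < k →
      (∑ a ∈ M, ∑ b ∈ M, if a * k = b then f a * f b else 0)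
        ≤ ∑ j ∈ J, ∑ l ∈ J,
            if |(k : ℝ) * (m j : ℝ) / (m l : ℝ) - 1| ≤ 3 / T then r j * r l else 0 := by
  intro k hk
  set x : ℝ := 1 + 1 / T
  have hx : 1 < x := lt_add_of_pos_right 1 (one_div_pos.2 (by linarith))
  set idx : ℕ → ℤ := fun n => ⌊Real.logb x n⌋
  have hidx : ∀ n ∈ M, (n : ℝ) ∈ Set.Ico (x ^ idx n) (x ^ (idx n + 1)) := fun n hn =>
    have hn : (0 : ℝ) < n := by exact_mod_cast (hM n hn).1
    ⟨zpow_floor_logb_le hx hn, lt_zpow_floor_logb_add_one hx hn⟩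
  have hmaps : ∀ a ∈ M.filter (· * k ∈ M), (idx a, idx (a * k)) ∈ J ×ˢ J := by
    intro a ha
    obtain ⟨haM, hakM⟩ := mem_filter.1 ha
    exact mem_product.2 ⟨(hJ _).2 ⟨a, haM, hidx a haM⟩, (hJ _).2 ⟨_, hakM, hidx _ hakM⟩⟩
  rw [sum_sum_ite_eq_comp M (· * k) (fun a b => f a * f b), ← sum_fiberwise_of_maps_to hmaps,
    sum_product]
  refine sum_le_sum fun j hj => sum_le_sum fun l hl => ?_
  have hfiber : ∀ a ∈ (M.filter (· * k ∈ M)).filter (fun a => (idx a, idx (a * k)) = (j, l)),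
      a ∈ M ∧ a * k ∈ M ∧ (a : ℝ) ∈ Set.Ico (x ^ j) (x ^ (j + 1)) ∧
        ((a * k : ℕ) : ℝ) ∈ Set.Ico (x ^ l) (x ^ (l + 1)) := by
    intro a ha
    simp only [mem_filter, Prod.mk.injEq] at ha
    obtain ⟨⟨haM, hakM⟩, rfl, rfl⟩ := ha
    exact ⟨haM, hakM, hidx a haM, hidx _ hakM⟩
  rw [hr j hj, hr l hl]
  obtain ⟨-, hmj, hmj', -⟩ := hm j hj
  obtain ⟨-, hml, hml', -⟩ := hm l hl
  exact sum_mul_apply_mul_le_ite (by linarith) hk f ⟨hmj, hmj'⟩ ⟨hml, hml'⟩ hfiber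

/-- Transfer of coefficient sums from `M` to the separated representatives `M'`
(inequality (3.4) of the paper). -/
theorem coefficient_transfer (T : ℝ) (hT : 2 ≤ T)
    (M : Finset ℕ) (f : ℕ → ℝ)
    (hM : ∀ n ∈ M, 0 < n ∧ Squarefree n) (hf : ∀ n, 0 ≤ f n)
    (hdiv : ∀ n ∈ M, ∀ d : ℕ, d ∣ n → d ∈ M)
    (J : Finset ℤ)
    (hJ : ∀ j : ℤ, j ∈ J ↔ ∃ n ∈ M,
      (1 + 1 / T) ^ j ≤ (n : ℝ) ∧ (n : ℝ) < (1 + 1 / T) ^ (j + 1))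
    (m : ℤ → ℕ)
    (hm : ∀ j ∈ J, m j ∈ M ∧ (1 + 1 / T) ^ j ≤ (m j : ℝ) ∧
      (m j : ℝ) < (1 + 1 / T) ^ (j + 1) ∧
      ∀ n ∈ M, (1 + 1 / T) ^ j ≤ (n : ℝ) → (n : ℝ) < (1 + 1 / T) ^ (j + 1) → m j ≤ n)
    (r : ℤ → ℝ)
    (hr : ∀ j ∈ J, r j = Real.sqrt (∑ n ∈ M.filter (fun n : ℕ =>
      (1 + 1 / T) ^ (j - 1) ≤ (n : ℝ) ∧ (n : ℝ) ≤ (1 + 1 / T) ^ (j + 2)), f n ^ 2)) :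
    ∀ k : ℕ, 0 < k →
      (∑ a ∈ M, ∑ b ∈ M, if a * k = b then f a * f b else 0)
        ≤ ∑ j ∈ J, ∑ l ∈ J,
            if |(k : ℝ) * (m j : ℝ) / (m l : ℝ) - 1| ≤ 3 / T then r j * r l else 0 :=
  coefficient_transfer_general T hT M f hM J hJ m hm r hr
end
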